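/- arXiv:2506.03514 — 3 statements merged into one kernel-verified Lean document; each statement's English description precedes it below -/
import Mathlib

section
/- Let δ ∈ [0,1] and let ψ ∈ ℂ² be a unit vector with |⟨e₀, ψ⟩| = q. Then for every unit vector ω ∈ ℂ² satisfying the significance constraint |⟨e₀, ω⟩|² ≥ 1 − δ, the type II error satisfies |⟨ω, ψ⟩|² ≥ (max(0, q·√(1−δ) − √(1−q²)·√δ))². -/
/-!
Expanding `⟪ω, ψ⟫ = conj ω₀ ψ₀ + conj ω₁ ψ₁`, the reverse triangle inequality gives
`‖⟪ω, ψ⟫‖ ≥ ‖ω₀‖ q - ‖ω₁‖ √(1 - q²)`, and since `‖ω₀‖² + ‖ω₁‖² = 1` the significance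
constraint forces `‖ω₀‖ ≥ √(1 - δ)` and `‖ω₁‖ ≤ √δ`.
-/

open scoped InnerProductSpace

noncomputable def e : Fin 2 → EuclideanSpace ℂ (Fin 2) := fun i => EuclideanSpace.single i 1

open scoped ComplexConjugate

section
variable {𝕜 : Type*} [RCLike 𝕜]

lemma EuclideanSpace.norm_sq_fin_two (x : EuclideanSpace 𝕜 (Fin 2)) :
    ‖x‖ ^ 2 = ‖x 0‖ ^ 2 + ‖x 1‖ ^ 2 := by
  rw [EuclideanSpace.norm_sq_eq, Fin.sum_univ_two]

lemma EuclideanSpace.sub_le_norm_inner_fin_two (x y : EuclideanSpace 𝕜 (Fin 2)) :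
    ‖x 0‖ * ‖y 0‖ - ‖x 1‖ * ‖y 1‖ ≤ ‖⟪x, y⟫_𝕜‖ := by
  have hinner : ⟪x, y⟫_𝕜 = conj (x 0) * y 0 + conj (x 1) * y 1 := by
    simp [PiLp.inner_apply, Fin.sum_univ_two, mul_comm]
  calc ‖x 0‖ * ‖y 0‖ - ‖x 1‖ * ‖y 1‖
      = ‖conj (x 0) * y 0‖ - ‖conj (x 1) * y 1‖ := by simp only [norm_mul, RCLike.norm_conj]
    _ ≤ ‖⟪x, y⟫_𝕜‖ := hinner ▸ norm_sub_le_norm_add _ _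

end

lemma inner_e_zero_left (x : EuclideanSpace ℂ (Fin 2)) : ⟪e 0, x⟫_ℂ = x 0 := by
  simp [e, EuclideanSpace.inner_single_left]

theorem stmt0_general (δ : ℝ)
    (ψ : EuclideanSpace ℂ (Fin 2)) (hψ : ‖ψ‖ = 1) (q : ℝ)
    (hq : ‖⟪e 0, ψ⟫_ℂ‖ = q)
    (ω : EuclideanSpace ℂ (Fin 2)) (hω : ‖ω‖ = 1)
    (hsig : ‖⟪e 0, ω⟫_ℂ‖ ^ 2 ≥ 1 - δ) :
    ‖⟪ω, ψ⟫_ℂ‖ ^ 2 ≥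
      (max 0 (q * Real.sqrt (1 - δ) - Real.sqrt (1 - q ^ 2) * Real.sqrt δ)) ^ 2 := by
  rw [inner_e_zero_left] at hq hsig
  have hψ_sq := EuclideanSpace.norm_sq_fin_two ψ
  have hω_sq := EuclideanSpace.norm_sq_fin_two ω
  rw [hψ, hq] at hψ_sq
  rw [hω] at hω_sq
  have hω0 : Real.sqrt (1 - δ) ≤ ‖ω 0‖ :=
    (Real.sqrt_le_left (norm_nonneg _)).mpr (by linarith)
  have hω1 : ‖ω 1‖ ≤ Real.sqrt δ := Real.le_sqrt_of_sq_le (by linarith)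
  have hψ1 : Real.sqrt (1 - q ^ 2) = ‖ψ 1‖ := by
    rw [show 1 - q ^ 2 = ‖ψ 1‖ ^ 2 by linarith, Real.sqrt_sq (norm_nonneg _)]
  have hq0 : 0 ≤ q := hq ▸ norm_nonneg _
  have h_overlap :
      q * Real.sqrt (1 - δ) - Real.sqrt (1 - q ^ 2) * Real.sqrt δ ≤ ‖⟪ω, ψ⟫_ℂ‖ :=
    calc q * Real.sqrt (1 - δ) - Real.sqrt (1 - q ^ 2) * Real.sqrt δ
        ≤ ‖ω 0‖ * q - ‖ω 1‖ * ‖ψ 1‖ := by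
          rw [hψ1]
          linarith [mul_le_mul_of_nonneg_right hω0 hq0,
            mul_le_mul_of_nonneg_left hω1 (norm_nonneg (ψ 1))]
      _ ≤ ‖⟪ω, ψ⟫_ℂ‖ := hq ▸ EuclideanSpace.sub_le_norm_inner_fin_two ω ψ
  exact pow_le_pow_left₀ (le_max_left _ _) (max_le (norm_nonneg _) h_overlap) 2

theorem stmt0 (δ : ℝ) (hδ : δ ∈ Set.Icc (0:ℝ) 1)
    (ψ : EuclideanSpace ℂ (Fin 2)) (hψ : ‖ψ‖ = 1) (q : ℝ)
    (hq : ‖⟪e 0, ψ⟫_ℂ‖ = q)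
    (ω : EuclideanSpace ℂ (Fin 2)) (hω : ‖ω‖ = 1)
    (hsig : ‖⟪e 0, ω⟫_ℂ‖ ^ 2 ≥ 1 - δ) :
    ‖⟪ω, ψ⟫_ℂ‖ ^ 2 ≥
      (max 0 (q * Real.sqrt (1 - δ) - Real.sqrt (1 - q ^ 2) * Real.sqrt δ)) ^ 2 :=
  stmt0_general δ ψ hψ q hq ω hω hsig
end

section
/- Let δ ∈ [0,1] and let ψ ∈ ℂ² be a unit vector with |⟨e₀, ψ⟩| = q. Then there exists a unit vector ω ∈ ℂ² with |⟨e₀, ω⟩|² ≥ 1 − δ such that |⟨ω, ψ⟩|² = (max(0, q·√(1−δ) − √(1−q²)·√δ))²; in particular, if q ≤ √δ the minimal type II error is 0, and if q > √δ it equals (q·√(1−δ) − √(1−q²)·√δ)². -/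
/-!
Write `ψ = (ψ₀, ψ₁)` with `|ψ₀| = q`, `|ψ₁| = √(1 - q²)`. Aligning the phases of
`ω = (a u, -b v)` with those of `ψ₀, ψ₁` gives `⟨ω, ψ⟩ = a q - b √(1 - q²)` for any real
`a² + b² = 1`. If `q ≤ √δ`, take `(a, b) = (√(1 - q²), q)`: then `ω ⊥ ψ` and
`a² = 1 - q² ≥ 1 - δ`. Otherwise take `(a, b) = (√(1 - δ), √δ)`, which saturates the
significance constraint, and `q √(1 - δ) - √(1 - q²) √δ ≥ 0` because it has the sign of
`q² - δ`.
-/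

open scoped InnerProductSpace

lemma inner_e_zero (ψ : EuclideanSpace ℂ (Fin 2)) : ⟪e 0, ψ⟫_ℂ = ψ 0 := by
  simp [e, EuclideanSpace.inner_single_left]

lemma Complex.exists_norm_eq_one_conj_mul_eq_norm (z : ℂ) :
    ∃ u : ℂ, ‖u‖ = 1 ∧ starRingEnd ℂ u * z = ‖z‖ := by
  set u := Complex.exp (z.arg * Complex.I)
  have hu : ‖u‖ = 1 := Complex.norm_exp_ofReal_mul_I _
  refine ⟨u, hu, ?_⟩
  calc starRingEnd ℂ u * z = ‖z‖ * (starRingEnd ℂ u * u) := by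
        nth_rw 1 [← Complex.norm_mul_exp_arg_mul_I z]; ring
    _ = ‖z‖ := by rw [Complex.conj_mul', hu]; simp

lemma exists_inner_eq_mul_norm_sub_mul_norm (ψ : EuclideanSpace ℂ (Fin 2)) (a b : ℝ) :
    ∃ ω : EuclideanSpace ℂ (Fin 2), ‖ω‖ ^ 2 = a ^ 2 + b ^ 2 ∧ ‖ω 0‖ = |a| ∧
      ⟪ω, ψ⟫_ℂ = a * ‖ψ 0‖ - b * ‖ψ 1‖ := by
  obtain ⟨u, hu, hu_conj⟩ := Complex.exists_norm_eq_one_conj_mul_eq_norm (ψ 0)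
  obtain ⟨v, hv, hv_conj⟩ := Complex.exists_norm_eq_one_conj_mul_eq_norm (ψ 1)
  refine ⟨!₂[a * u, -(b * v)], ?_, ?_, ?_⟩
  · simp [EuclideanSpace.norm_sq_eq, Fin.sum_univ_two, hu, hv]
  · simp [hu]
  · simp only [PiLp.inner_apply, Fin.sum_univ_two, RCLike.inner_apply, Matrix.cons_val_zero,
      Matrix.cons_val_one, map_mul, map_neg, Complex.conj_ofReal]
    linear_combination (a : ℂ) * hu_conj - (b : ℂ) * hv_conj

lemma sub_sqrt_mul_sqrt_nonpos_iff {δ q : ℝ} (hδ0 : 0 ≤ δ) (hq0 : 0 ≤ q) (hq1 : q ≤ 1) :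
    q * √(1 - δ) - √(1 - q ^ 2) * √δ ≤ 0 ↔ q ≤ √δ := by
  have hq2 : 0 ≤ 1 - q ^ 2 := by nlinarith
  have hlhs : q * √(1 - δ) = √(q ^ 2 * (1 - δ)) := by
    rw [Real.sqrt_mul (sq_nonneg q), Real.sqrt_sq hq0]
  rw [sub_nonpos, hlhs, ← Real.sqrt_mul hq2, Real.sqrt_le_sqrt_iff (by positivity),
    Real.le_sqrt hq0 hδ0]
  constructor <;> intro h <;> nlinarith

lemma exists_sq_add_sq_eq_one_mul_sub_mul_eq_max {δ q : ℝ} (hδ0 : 0 ≤ δ) (hδ1 : δ ≤ 1)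
    (hq0 : 0 ≤ q) (hq1 : q ≤ 1) :
    ∃ a b : ℝ, a ^ 2 + b ^ 2 = 1 ∧ 1 - δ ≤ a ^ 2 ∧
      a * q - b * √(1 - q ^ 2) = max 0 (q * √(1 - δ) - √(1 - q ^ 2) * √δ) := by
  have hq2 : 0 ≤ 1 - q ^ 2 := by nlinarith
  by_cases h : q ≤ √δ
  · refine ⟨√(1 - q ^ 2), q, ?_, ?_, ?_⟩
    · rw [Real.sq_sqrt hq2]; ring
    · rw [Real.sq_sqrt hq2]; nlinarith [(Real.le_sqrt hq0 hδ0).mp h]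
    · rw [max_eq_left ((sub_sqrt_mul_sqrt_nonpos_iff hδ0 hq0 hq1).mpr h)]; ring
  · refine ⟨√(1 - δ), √δ, ?_, ?_, ?_⟩
    · rw [Real.sq_sqrt (by linarith), Real.sq_sqrt hδ0]; ring
    · rw [Real.sq_sqrt (by linarith)]
    · rw [max_eq_right (not_le.mp (mt (sub_sqrt_mul_sqrt_nonpos_iff hδ0 hq0 hq1).mp h)).le]
      ring

theorem stmt1 (δ : ℝ) (hδ : δ ∈ Set.Icc (0:ℝ) 1)
    (ψ : EuclideanSpace ℂ (Fin 2)) (hψ : ‖ψ‖ = 1) (q : ℝ)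
    (hq : ‖⟪e 0, ψ⟫_ℂ‖ = q) :
    ∃ ω : EuclideanSpace ℂ (Fin 2), ‖ω‖ = 1 ∧
      (‖⟪e 0, ω⟫_ℂ‖) ^ 2 ≥ 1 - δ ∧
      (‖⟪ω, ψ⟫_ℂ‖) ^ 2 =
        (max 0 (q * Real.sqrt (1 - δ) - Real.sqrt (1 - q ^ 2) * Real.sqrt δ)) ^ 2 ∧
      (q ≤ Real.sqrt δ →
        (max 0 (q * Real.sqrt (1 - δ) - Real.sqrt (1 - q ^ 2) * Real.sqrt δ)) ^ 2 = 0) ∧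
      (Real.sqrt δ < q →
        (max 0 (q * Real.sqrt (1 - δ) - Real.sqrt (1 - q ^ 2) * Real.sqrt δ)) ^ 2 =
          (q * Real.sqrt (1 - δ) - Real.sqrt (1 - q ^ 2) * Real.sqrt δ) ^ 2) := by
  obtain ⟨hδ0, hδ1⟩ := hδ
  rw [inner_e_zero] at hq
  have hψ_sq : ‖ψ 0‖ ^ 2 + ‖ψ 1‖ ^ 2 = 1 := by
    rw [← Fin.sum_univ_two (fun i => ‖ψ i‖ ^ 2), ← EuclideanSpace.norm_sq_eq, hψ, one_pow]
  have hq0 : 0 ≤ q := hq ▸ norm_nonneg _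
  have hq1 : q ≤ 1 := by nlinarith [sq_nonneg ‖ψ 1‖]
  have hψ1 : ‖ψ 1‖ = √(1 - q ^ 2) := by
    rw [← hq, ← Real.sqrt_sq (norm_nonneg (ψ 1))]; congr 1; linarith
  have hsign := sub_sqrt_mul_sqrt_nonpos_iff hδ0 hq0 hq1
  obtain ⟨a, b, hab, ha, hval⟩ := exists_sq_add_sq_eq_one_mul_sub_mul_eq_max hδ0 hδ1 hq0 hq1
  obtain ⟨ω, hω, hω0, hωψ⟩ := exists_inner_eq_mul_norm_sub_mul_norm ψ a b
  refine ⟨ω, ?_, ?_, ?_, fun h => ?_, fun h => ?_⟩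
  · rw [← pow_eq_one_iff_of_nonneg (norm_nonneg ω) two_ne_zero, hω, hab]
  · rwa [inner_e_zero, hω0, sq_abs]
  · rw [hωψ, hq, hψ1, ← hval]; norm_cast; rw [Real.norm_eq_abs, sq_abs]
  · rw [max_eq_left (hsign.mpr h), sq, mul_zero]
  · rw [max_eq_right (not_le.mp (mt hsign.mp (not_le.mpr h))).le]
end

section
/- Let δ ∈ [0,1], φ ∈ ℝ, and i ∈ {0,1}. For the certification of quantum states with null hypothesis e_i and alternative hypothesis U_φ e_i, the minimum of |⟨ω, U_φ e_i⟩|² over all unit vectors ω ∈ ℂ² with |⟨e_i, ω⟩|² ≥ 1 − δ equals ( (|1+e^{iφ}|/2)·√(1−δ) − √(1 − |1+e^{iφ}|²/4)·√δ )² if |1+e^{iφ}|/2 > √δ, and equals 0 if |1+e^{iφ}|/2 ≤ √δ. -/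
open scoped InnerProductSpace Matrix

noncomputable def Hmat : Matrix (Fin 2) (Fin 2) ℂ :=
  ((1 / Real.sqrt 2 : ℝ) : ℂ) • !![1, 1; 1, -1]

noncomputable def Uphi (φ : ℝ) : Matrix (Fin 2) (Fin 2) ℂ :=
  Hmat * !![1, 0; 0, Complex.exp (φ * Complex.I)] * Hmatᴴ

/-!
Write the alternative as `ψ = u • x + w • y` in an orthonormal pair `x, y` and put
`a = ⟪ω, x⟫`, `b = ⟪ω, y⟫`. Bessel's inequality `‖a‖² + ‖b‖² ≤ 1` turns the significance
constraint into `‖a‖ ≥ √(1 - δ)`, `‖b‖ ≤ √δ`, and the reverse triangle inequality gives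
`‖⟪ω, ψ⟫‖ ≥ ‖u‖ ‖a‖ - ‖w‖ ‖b‖ ≥ ‖u‖ √(1 - δ) - ‖w‖ √δ`, a bound that is positive exactly when
`√δ < ‖u‖`. Choosing the phases of the coordinates of `ω` against those of `u` and `w` makes the
triangle inequality an equality, so the bound is attained, and otherwise the moduli `‖w‖, ‖u‖`
make `⟪ω, ψ⟫` vanish. For `U_φ e_i` the coefficients are `u = (1 + e^{iφ}) / 2` and
`w = (1 - e^{iφ}) / 2`.
-/

open Complex ComplexConjugate

lemma exists_norm_eq_conj_mul_eq (r : ℝ) (hr : 0 ≤ r) (z : ℂ) :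
    ∃ a : ℂ, ‖a‖ = r ∧ conj a * z = r * ‖z‖ := by
  refine ⟨r * exp (arg z * I), by simp [abs_of_nonneg hr], ?_⟩
  calc conj (r * exp (arg z * I)) * z
      = r * ‖z‖ * (exp (-(arg z * I)) * exp (arg z * I)) := by
        nth_rw 2 [← norm_mul_exp_arg_mul_I z]
        rw [map_mul, conj_ofReal, ← exp_conj, map_mul, conj_ofReal, conj_I]
        ring_nf
    _ = r * ‖z‖ := by rw [← exp_add, neg_add_cancel, exp_zero, mul_one]

lemma norm_sq_half_one_add_add_norm_sq_half_one_sub {z : ℂ} (hz : ‖z‖ = 1) :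
    ‖(1 + z) / 2‖ ^ 2 + ‖(1 - z) / 2‖ ^ 2 = 1 := by
  have := parallelogram_law_with_norm ℂ (1 : ℂ) z
  simp only [norm_div, RCLike.norm_ofNat, norm_one, hz] at this ⊢
  nlinarith

lemma mul_sqrt_sub_mul_sqrt_le {δ c s α β : ℝ} (hδ : 0 ≤ δ) (hs : 0 ≤ s) (hα : 0 ≤ α)
    (hβ : 0 ≤ β) (hcs : c ^ 2 + s ^ 2 = 1) (hαβ : α ^ 2 + β ^ 2 ≤ 1) (hδα : 1 - δ ≤ α ^ 2)
    (hδc : √δ < c) :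
    0 ≤ c * √(1 - δ) - s * √δ ∧ c * √(1 - δ) - s * √δ ≤ c * α - s * β := by
  have hα' : √(1 - δ) ≤ α := (Real.sqrt_le_left hα).2 hδα
  have hβ' : β ≤ √δ := (Real.le_sqrt hβ hδ).2 (by linarith)
  have hδc' : δ < c ^ 2 := by
    simpa [Real.sq_sqrt hδ] using pow_lt_pow_left₀ hδc (Real.sqrt_nonneg δ) two_ne_zero
  have hs2 : s ^ 2 < 1 - δ := by linarith
  have hs' : s ≤ √(1 - δ) := (Real.le_sqrt hs (by nlinarith)).2 hs2.le
  have hc : 0 ≤ c := (Real.sqrt_nonneg δ).trans hδc.le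
  constructor
  · nlinarith [mul_le_mul_of_nonneg_right hs' (Real.sqrt_nonneg δ),
      mul_le_mul_of_nonneg_right hδc.le (Real.sqrt_nonneg (1 - δ))]
  · nlinarith [mul_le_mul_of_nonneg_left hα' hc, mul_le_mul_of_nonneg_left hβ' hs]

lemma norm_mul_sub_norm_mul_le (u w p q : ℂ) : ‖u‖ * ‖p‖ - ‖w‖ * ‖q‖ ≤ ‖u * p + w * q‖ := by
  simpa [norm_mul] using norm_sub_norm_le (u * p) (-(w * q))

def typeIIErrors {E : Type*} [NormedAddCommGroup E] [InnerProductSpace ℂ E] (δ : ℝ) (x ψ : E) :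
    Set ℝ :=
  {t | ∃ ω : E, ‖ω‖ = 1 ∧ ‖⟪x, ω⟫_ℂ‖ ^ 2 ≥ 1 - δ ∧ t = ‖⟪ω, ψ⟫_ℂ‖ ^ 2}

namespace Orthonormal

variable {ι E : Type*} [NormedAddCommGroup E] [InnerProductSpace ℂ E] {v : ι → E}
  {i j : ι}

lemma inner_smul_add_smul (hv : Orthonormal ℂ v) (hij : i ≠ j) (a b c d : ℂ) :
    ⟪a • v i + b • v j, c • v i + d • v j⟫_ℂ = conj a * c + conj b * d := by
  simp only [inner_add_left, inner_add_right, inner_smul_left, inner_smul_right,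
    inner_self_eq_norm_sq_to_K, hv.1, hv.2 hij, hv.2 hij.symm, map_one]
  ring

lemma norm_sq_smul_add_smul (hv : Orthonormal ℂ v) (hij : i ≠ j) (a b : ℂ) :
    ‖a • v i + b • v j‖ ^ 2 = ‖a‖ ^ 2 + ‖b‖ ^ 2 := by
  have h := norm_add_sq_eq_norm_sq_add_norm_sq_of_inner_eq_zero (𝕜 := ℂ) (a • v i) (b • v j)
    (by rw [inner_smul_left, inner_smul_right, hv.2 hij, mul_zero, mul_zero])
  rw [sq, sq, sq]
  simpa only [norm_smul, hv.1, mul_one] using h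

lemma norm_inner_sq_add_norm_inner_sq_le (hv : Orthonormal ℂ v) (hij : i ≠ j) (x : E) :
    ‖⟪x, v i⟫_ℂ‖ ^ 2 + ‖⟪x, v j⟫_ℂ‖ ^ 2 ≤ ‖x‖ ^ 2 := by
  classical
  simpa [Finset.sum_pair hij, norm_inner_symm x] using hv.sum_inner_products_le x (s := {i, j})

lemma sq_sub_mem_typeIIErrors (hv : Orthonormal ℂ v) (hij : i ≠ j) {δ α β : ℝ} (hα : 0 ≤ α)
    (hβ : 0 ≤ β) (hαβ : α ^ 2 + β ^ 2 = 1) (hδα : 1 - δ ≤ α ^ 2) (u w : ℂ) :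
    (‖u‖ * α - ‖w‖ * β) ^ 2 ∈ typeIIErrors δ (v i) (u • v i + w • v j) := by
  obtain ⟨a, ha, hau⟩ := exists_norm_eq_conj_mul_eq α hα u
  obtain ⟨b, hb, hbw⟩ := exists_norm_eq_conj_mul_eq β hβ w
  refine ⟨a • v i + (-b) • v j, ?_, ?_, ?_⟩
  · rw [← pow_eq_one_iff_of_nonneg (norm_nonneg _) two_ne_zero, hv.norm_sq_smul_add_smul hij,
      norm_neg, ha, hb, hαβ]
  · simpa [inner_add_right, inner_smul_right, inner_self_eq_norm_sq_to_K, hv.1, hv.2 hij, ha]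
      using hδα
  · rw [hv.inner_smul_add_smul hij, map_neg, neg_mul, hau, hbw, ← sub_eq_add_neg]
    norm_cast
    rw [Real.norm_eq_abs, sq_abs]
    ring

lemma sq_le_of_mem_typeIIErrors (hv : Orthonormal ℂ v) (hij : i ≠ j) {δ : ℝ} (hδ : 0 ≤ δ)
    {u w : ℂ} (huw : ‖u‖ ^ 2 + ‖w‖ ^ 2 = 1) (hδu : √δ < ‖u‖) {t : ℝ}
    (ht : t ∈ typeIIErrors δ (v i) (u • v i + w • v j)) :
    (‖u‖ * √(1 - δ) - ‖w‖ * √δ) ^ 2 ≤ t := by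
  obtain ⟨ω, hω, hδω, rfl⟩ := ht
  have hinner : ⟪ω, u • v i + w • v j⟫_ℂ = u * ⟪ω, v i⟫_ℂ + w * ⟪ω, v j⟫_ℂ := by
    rw [inner_add_right, inner_smul_right, inner_smul_right]
  have hbessel := hv.norm_inner_sq_add_norm_inner_sq_le hij ω
  rw [hω, one_pow] at hbessel
  rw [norm_inner_symm] at hδω
  obtain ⟨hnonneg, hle⟩ := mul_sqrt_sub_mul_sqrt_le hδ (norm_nonneg w) (norm_nonneg _)
    (norm_nonneg _) huw hbessel hδω hδu
  rw [hinner]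
  exact pow_le_pow_left₀ hnonneg (hle.trans (norm_mul_sub_norm_mul_le _ _ _ _)) 2

theorem isLeast_typeIIErrors (hv : Orthonormal ℂ v) (hij : i ≠ j) {δ : ℝ} (hδ0 : 0 ≤ δ)
    (hδ1 : δ ≤ 1) {u w : ℂ} (huw : ‖u‖ ^ 2 + ‖w‖ ^ 2 = 1) :
    IsLeast (typeIIErrors δ (v i) (u • v i + w • v j))
      (if √δ < ‖u‖ then (‖u‖ * √(1 - δ) - √(1 - ‖u‖ ^ 2) * √δ) ^ 2 else 0) := by
  have hw : √(1 - ‖u‖ ^ 2) = ‖w‖ := by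
    rw [← huw, add_sub_cancel_left, Real.sqrt_sq (norm_nonneg w)]
  rw [hw]
  split_ifs with hδu
  · refine ⟨hv.sq_sub_mem_typeIIErrors hij (Real.sqrt_nonneg _) (Real.sqrt_nonneg _) ?_ ?_ u w,
      fun t ht => hv.sq_le_of_mem_typeIIErrors hij hδ0 huw hδu ht⟩
    · rw [Real.sq_sqrt (by linarith), Real.sq_sqrt hδ0]; ring
    · rw [Real.sq_sqrt (by linarith)]
  · have hu : ‖u‖ ^ 2 ≤ δ := by
      rw [not_lt] at hδu
      simpa [Real.sq_sqrt hδ0] using pow_le_pow_left₀ (norm_nonneg u) hδu 2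
    refine ⟨?_, fun t ⟨ω, _, _, ht⟩ => ht ▸ sq_nonneg _⟩
    have := hv.sq_sub_mem_typeIIErrors hij (δ := δ) (norm_nonneg w) (norm_nonneg u)
      (by linarith) (by linarith) u w
    rwa [mul_comm, sub_self, zero_pow two_ne_zero] at this

end Orthonormal

lemma Uphi_eq (φ : ℝ) :
    Uphi φ = !![(1 + exp (φ * I)) / 2, (1 - exp (φ * I)) / 2;
      (1 - exp (φ * I)) / 2, (1 + exp (φ * I)) / 2] := by
  have h : ((√2 : ℝ) : ℂ)⁻¹ * ((√2 : ℝ) : ℂ)⁻¹ = 1 / 2 := by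
    rw [← mul_inv, ← ofReal_mul, Real.mul_self_sqrt zero_le_two]
    norm_num
  ext k l
  fin_cases k <;> fin_cases l <;>
    simp [Uphi, Hmat, Matrix.mul_apply, Fin.sum_univ_two, Matrix.conjTranspose_apply]
  · linear_combination (1 + exp (φ * I)) * h
  · linear_combination (1 - exp (φ * I)) * h
  · linear_combination (1 - exp (φ * I)) * h
  · linear_combination (1 + exp (φ * I)) * h

lemma orthonormal_e : Orthonormal ℂ e := EuclideanSpace.orthonormal_single

lemma toLp_Uphi_mulVec_e (φ : ℝ) {i j : Fin 2} (hij : i ≠ j) :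
    WithLp.toLp 2 ((Uphi φ) *ᵥ e i) =
      ((1 + exp (φ * I)) / 2) • e i + ((1 - exp (φ * I)) / 2) • e j := by
  ext k
  fin_cases i <;> fin_cases j <;> fin_cases k <;>
    simp_all [Uphi_eq, Matrix.mulVec, dotProduct, e]

theorem stmt2 (δ : ℝ) (hδ : δ ∈ Set.Icc (0:ℝ) 1) (φ : ℝ) (i : Fin 2) :
    IsLeast
      {t : ℝ | ∃ ω : EuclideanSpace ℂ (Fin 2), ‖ω‖ = 1 ∧
        (‖⟪e i, ω⟫_ℂ‖) ^ 2 ≥ 1 - δ ∧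
        t = (‖⟪ω, (WithLp.toLp 2 ((Uphi φ).mulVec (e i)) : EuclideanSpace ℂ (Fin 2))⟫_ℂ‖) ^ 2}
      (if Real.sqrt δ < ‖1 + Complex.exp (φ * Complex.I)‖ / 2 then
        (‖1 + Complex.exp (φ * Complex.I)‖ / 2 * Real.sqrt (1 - δ) -
          Real.sqrt (1 - (‖1 + Complex.exp (φ * Complex.I)‖) ^ 2 / 4) *
            Real.sqrt δ) ^ 2
      else 0) := by
  obtain ⟨hδ0, hδ1⟩ := hδ
  obtain ⟨j, hji⟩ := exists_ne i
  have h := orthonormal_e.isLeast_typeIIErrors hji.symm hδ0 hδ1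
    (norm_sq_half_one_add_add_norm_sq_half_one_sub (norm_exp_ofReal_mul_I φ))
  rw [norm_div, RCLike.norm_ofNat, div_pow, show (2 : ℝ) ^ 2 = 4 by norm_num] at h
  rwa [toLp_Uphi_mulVec_e φ hji.symm]
end
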